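/- arXiv:2007.11626 — 4 statements merged into one kernel-verified Lean document; each statement's English description precedes it below -/
import Mathlib

section
/- Let t be even and let R be a partition of Z_t into t/4 blocks of size 4 (requiring 4 | t). For each i ∈ Z_8 with binary representation (j_2 j_3 j_4), define R_i as the set containing, for each block {x_1,x_2,x_3,x_4} of R, the two quadruples {(x_1,0),(x_2,j_2),(x_3,j_3),(x_4,j_4)} and {(x_1,1),(x_2,j_2+1),(x_3,j_3+1),(x_4,j_4+1)} (second coordinates mod 2). Then each R_i is a parallel class of Z_t × Z_2: its quadruples are pairwise disjoint with union Z_t × Z_2; moreover R_i and R_j are disjoint for i ≠ j. -/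
/-!
Over a sorted block `x₁ < x₂ < x₃ < x₄` of `R`, the two quadruples that the block contributes to
`R_b` are the levels `c = 0, 1` of `{(x₁, c), (x₂, b₀ + c), (x₃, b₁ + c), (x₄, b₂ + c)}`.
The point `(xᵢ, s)` lies on exactly one level, the two levels are disjoint, and a level determines
both `c` and `b`. Since `R` is a partition, two quadruples of any classes that meet lie over the
same block, hence over the same sorted tuple, and everything reduces to these three facts.
-/

/-- Given a partition `R` of `Z_t` into blocks of size 4 and bits `b = (j₂,j₃,j₄)`,
the class `R_b` contains, for each block `{x₁,x₂,x₃,x₄}` of `R` (listed in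
increasing order), the two quadruples `{(x₁,0),(x₂,j₂),(x₃,j₃),(x₄,j₄)}` and
`{(x₁,1),(x₂,j₂+1),(x₃,j₃+1),(x₄,j₄+1)}`. -/
def doubledClass (t : ℕ) (R : Finset (Finset (Fin t))) (b : Fin 3 → ZMod 2) :
    Set (Finset (Fin t × ZMod 2)) :=
  {Q | ∃ B ∈ R, ∃ x1 x2 x3 x4 : Fin t, x1 < x2 ∧ x2 < x3 ∧ x3 < x4 ∧
    B = {x1, x2, x3, x4} ∧
    (Q = {(x1, 0), (x2, b 0), (x3, b 1), (x4, b 2)} ∨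
     Q = {(x1, 1), (x2, b 0 + 1), (x3, b 1 + 1), (x4, b 2 + 1)})}

namespace Finset

variable {α : Type*} [LinearOrder α]

theorem sort_lt_lt_lt {a b c d : α} (hab : a < b) (hbc : b < c) (hcd : c < d) :
    ({a, b, c, d} : Finset α).sort = [a, b, c, d] := by
  rw [sort_insert, sort_insert, sort_insert, sort_singleton] <;> grind

theorem eq_of_lt_lt_lt_of_insert_eq {a b c d a' b' c' d' : α}
    (hab : a < b) (hbc : b < c) (hcd : c < d) (hab' : a' < b') (hbc' : b' < c') (hcd' : c' < d')
    (h : ({a, b, c, d} : Finset α) = {a', b', c', d'}) : a = a' ∧ b = b' ∧ c = c' ∧ d = d' := by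
  have hsort := congrArg (·.sort) h
  simp only [sort_lt_lt_lt hab hbc hcd, sort_lt_lt_lt hab' hbc' hcd'] at hsort
  simpa using hsort

theorem exists_lt_lt_lt_eq_of_card_eq_four {s : Finset α} (h : s.card = 4) :
    ∃ a b c d, a < b ∧ b < c ∧ c < d ∧ s = {a, b, c, d} := by
  let f := s.orderEmbOfFin h
  refine ⟨f 0, f 1, f 2, f 3, f.strictMono (by decide), f.strictMono (by decide),
    f.strictMono (by decide), ?_⟩
  rw [← s.image_orderEmbOfFin_univ h]
  ext
  simp [-image_orderEmbOfFin_univ, Fin.exists_fin_succ, eq_comm, f]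

end Finset

section liftBlock

variable {α : Type*} [DecidableEq α] {x1 x2 x3 x4 : α}

def liftBlock (x1 x2 x3 x4 : α) (b : Fin 3 → ZMod 2) (c : ZMod 2) : Finset (α × ZMod 2) :=
  {(x1, c), (x2, b 0 + c), (x3, b 1 + c), (x4, b 2 + c)}

theorem fst_mem_of_mem_liftBlock {b : Fin 3 → ZMod 2} {c : ZMod 2} {p : α × ZMod 2}
    (hp : p ∈ liftBlock x1 x2 x3 x4 b c) : p.1 ∈ ({x1, x2, x3, x4} : Finset α) := by
  simp only [liftBlock, Finset.mem_insert, Finset.mem_singleton] at hp ⊢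
  rcases hp with rfl | rfl | rfl | rfl <;> simp

theorem exists_mem_liftBlock {x : α} (hx : x ∈ ({x1, x2, x3, x4} : Finset α))
    (b : Fin 3 → ZMod 2) (s : ZMod 2) : ∃ c, (x, s) ∈ liftBlock x1 x2 x3 x4 b c := by
  simp only [Finset.mem_insert, Finset.mem_singleton] at hx
  rcases hx with rfl | rfl | rfl | rfl
  · exact ⟨s, by simp [liftBlock]⟩
  · exact ⟨s - b 0, by simp [liftBlock]⟩
  · exact ⟨s - b 1, by simp [liftBlock]⟩
  · exact ⟨s - b 2, by simp [liftBlock]⟩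

theorem disjoint_liftBlock [Preorder α] (h12 : x1 < x2) (h23 : x2 < x3) (h34 : x3 < x4)
    {b : Fin 3 → ZMod 2} {c c' : ZMod 2} (hc : c ≠ c') :
    Disjoint (liftBlock x1 x2 x3 x4 b c) (liftBlock x1 x2 x3 x4 b c') := by
  rw [Finset.disjoint_left]
  intro p hp hp'
  simp only [liftBlock, Finset.mem_insert, Finset.mem_singleton] at hp hp'
  grind

theorem liftBlock_injective [Preorder α] (h12 : x1 < x2) (h23 : x2 < x3) (h34 : x3 < x4)
    {b b' : Fin 3 → ZMod 2} {c c' : ZMod 2}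
    (h : liftBlock x1 x2 x3 x4 b c = liftBlock x1 x2 x3 x4 b' c') : b = b' ∧ c = c' := by
  have mem : ∀ p ∈ liftBlock x1 x2 x3 x4 b c, p ∈ liftBlock x1 x2 x3 x4 b' c' :=
    fun p hp => h ▸ hp
  simp only [liftBlock, Finset.mem_insert, Finset.mem_singleton, forall_eq_or_imp, forall_eq,
    Prod.mk.injEq] at mem
  have hc : c = c' := by grind
  subst hc
  refine ⟨funext fun i => ?_, rfl⟩
  fin_cases i <;> grind

end liftBlock

section doubledClass

variable {t : ℕ} {R : Finset (Finset (Fin t))}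

theorem mem_doubledClass_iff {b : Fin 3 → ZMod 2} {Q : Finset (Fin t × ZMod 2)} :
    Q ∈ doubledClass t R b ↔ ∃ x1 x2 x3 x4 : Fin t, x1 < x2 ∧ x2 < x3 ∧ x3 < x4 ∧
      {x1, x2, x3, x4} ∈ R ∧ ∃ c, Q = liftBlock x1 x2 x3 x4 b c := by
  constructor
  · rintro ⟨B, hB, x1, x2, x3, x4, h12, h23, h34, rfl, hQ⟩
    refine ⟨x1, x2, x3, x4, h12, h23, h34, hB, ?_⟩
    rcases hQ with rfl | rfl
    exacts [⟨0, by simp [liftBlock]⟩, ⟨1, rfl⟩]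
  · rintro ⟨x1, x2, x3, x4, h12, h23, h34, hB, c, rfl⟩
    refine ⟨_, hB, x1, x2, x3, x4, h12, h23, h34, rfl, ?_⟩
    obtain rfl | rfl : c = 0 ∨ c = 1 := by decide +revert
    exacts [Or.inl (by simp [liftBlock]), Or.inr rfl]

theorem exists_liftBlock_of_not_disjoint (hdisj : ∀ B ∈ R, ∀ B' ∈ R, B ≠ B' → Disjoint B B')
    {b b' : Fin 3 → ZMod 2} {Q Q' : Finset (Fin t × ZMod 2)}
    (hQ : Q ∈ doubledClass t R b) (hQ' : Q' ∈ doubledClass t R b') (h : ¬Disjoint Q Q') :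
    ∃ x1 x2 x3 x4 : Fin t, x1 < x2 ∧ x2 < x3 ∧ x3 < x4 ∧
      ∃ c c', Q = liftBlock x1 x2 x3 x4 b c ∧ Q' = liftBlock x1 x2 x3 x4 b' c' := by
  obtain ⟨x1, x2, x3, x4, h12, h23, h34, hx, c, rfl⟩ := mem_doubledClass_iff.mp hQ
  obtain ⟨y1, y2, y3, y4, g12, g23, g34, hy, c', rfl⟩ := mem_doubledClass_iff.mp hQ'
  obtain ⟨p, hp, hp'⟩ := Finset.not_disjoint_iff.mp h
  have hblock : ({x1, x2, x3, x4} : Finset (Fin t)) = {y1, y2, y3, y4} := by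
    by_contra hne
    exact Finset.disjoint_left.mp (hdisj _ hx _ hy hne)
      (fst_mem_of_mem_liftBlock hp) (fst_mem_of_mem_liftBlock hp')
  obtain ⟨rfl, rfl, rfl, rfl⟩ :=
    Finset.eq_of_lt_lt_lt_of_insert_eq h12 h23 h34 g12 g23 g34 hblock
  exact ⟨x1, x2, x3, x4, h12, h23, h34, c, c', rfl, rfl⟩

theorem pairwiseDisjoint_doubledClass (hdisj : ∀ B ∈ R, ∀ B' ∈ R, B ≠ B' → Disjoint B B')
    (b : Fin 3 → ZMod 2) : (doubledClass t R b).PairwiseDisjoint id := by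
  intro Q hQ Q' hQ' hne
  by_contra h
  obtain ⟨x1, x2, x3, x4, h12, h23, h34, c, c', rfl, rfl⟩ :=
    exists_liftBlock_of_not_disjoint hdisj hQ hQ' h
  exact h (disjoint_liftBlock h12 h23 h34 fun hc => hne (hc ▸ rfl))

theorem disjoint_doubledClass (hdisj : ∀ B ∈ R, ∀ B' ∈ R, B ≠ B' → Disjoint B B')
    {b b' : Fin 3 → ZMod 2} (hb : b ≠ b') :
    Disjoint (doubledClass t R b) (doubledClass t R b') := by
  refine Set.disjoint_left.mpr fun Q hQ hQ' => ?_
  have hne : Q.Nonempty := by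
    obtain ⟨x1, x2, x3, x4, -, -, -, -, c, rfl⟩ := mem_doubledClass_iff.mp hQ
    exact Finset.insert_nonempty _ _
  obtain ⟨x1, x2, x3, x4, h12, h23, h34, c, c', rfl, h⟩ :=
    exists_liftBlock_of_not_disjoint hdisj hQ hQ' (by simpa using hne.ne_empty)
  exact hb (liftBlock_injective h12 h23 h34 h).1

theorem exists_mem_doubledClass (hblocks : ∀ B ∈ R, B.card = 4)
    (hcover : ∀ x : Fin t, ∃ B ∈ R, x ∈ B) (b : Fin 3 → ZMod 2) (p : Fin t × ZMod 2) :
    ∃ Q ∈ doubledClass t R b, p ∈ Q := by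
  obtain ⟨B, hB, hpB⟩ := hcover p.1
  obtain ⟨x1, x2, x3, x4, h12, h23, h34, rfl⟩ :=
    Finset.exists_lt_lt_lt_eq_of_card_eq_four (hblocks B hB)
  obtain ⟨c, hc⟩ := exists_mem_liftBlock hpB b p.2
  exact ⟨_, mem_doubledClass_iff.mpr ⟨x1, x2, x3, x4, h12, h23, h34, hB, c, rfl⟩, hc⟩

end doubledClass

theorem doubling_type_S_general (t : ℕ) (R : Finset (Finset (Fin t)))
    (hblocks : ∀ B ∈ R, B.card = 4)
    (hdisj : ∀ B ∈ R, ∀ B' ∈ R, B ≠ B' → Disjoint B B')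
    (hcover : ∀ x : Fin t, ∃ B ∈ R, x ∈ B) :
    (∀ b : Fin 3 → ZMod 2, ∀ Q ∈ doubledClass t R b, ∀ Q' ∈ doubledClass t R b,
      Q ≠ Q' → Disjoint Q Q') ∧
    (∀ b : Fin 3 → ZMod 2, ∀ p : Fin t × ZMod 2, ∃ Q ∈ doubledClass t R b, p ∈ Q) ∧
    (∀ b b' : Fin 3 → ZMod 2, b ≠ b' →
      Disjoint (doubledClass t R b) (doubledClass t R b')) :=
  ⟨fun b _ hQ _ hQ' hne => pairwiseDisjoint_doubledClass hdisj b hQ hQ' hne,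
    exists_mem_doubledClass hblocks hcover,
    fun _ _ hb => disjoint_doubledClass hdisj hb⟩

/-- If `R` is a partition of `Z_t` (with `4 ∣ t`) into blocks of size 4, then each
`R_b` (for `b ∈ Z_2³`, the binary representation of `i ∈ Z_8`) is a parallel class
of `Z_t × Z_2`: its quadruples are pairwise disjoint with union `Z_t × Z_2`;
moreover distinct classes `R_b`, `R_{b'}` are disjoint. -/
theorem doubling_type_S (t : ℕ) (h4 : 4 ∣ t) (R : Finset (Finset (Fin t)))
    (hblocks : ∀ B ∈ R, B.card = 4)
    (hdisj : ∀ B ∈ R, ∀ B' ∈ R, B ≠ B' → Disjoint B B')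
    (hcover : ∀ x : Fin t, ∃ B ∈ R, x ∈ B) :
    (∀ b : Fin 3 → ZMod 2, ∀ Q ∈ doubledClass t R b, ∀ Q' ∈ doubledClass t R b,
      Q ≠ Q' → Disjoint Q Q') ∧
    (∀ b : Fin 3 → ZMod 2, ∀ p : Fin t × ZMod 2, ∃ Q ∈ doubledClass t R b, p ∈ Q) ∧
    (∀ b b' : Fin 3 → ZMod 2, b ≠ b' →
      Disjoint (doubledClass t R b) (doubledClass t R b')) :=
  doubling_type_S_general t R hblocks hdisj hcover
end

section
/- If a k × n matrix M̂ with entries in an n-set Q has the property that every row is a permutation of Q and every column has k distinct entries, then M̂ can be extended to an n × n Latin square on Q (i.e., there is an n × n matrix whose first k rows are M̂ and in which every row and every column is a permutation of Q). -/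
open Finset

/-- Hall step: given a `k × n` latin rectangle with `k < n`, there is a new row
avoiding all column conflicts. -/
lemma latin_exists_new_row (n k : ℕ) (hk : k < n) (Q : Type*) [Fintype Q] [DecidableEq Q]
    (hQ : Fintype.card Q = n) (M : Fin k → Fin n → Q)
    (hrow : ∀ i, Function.Bijective (M i))
    (hcol : ∀ j, Function.Injective fun i => M i j) :
    ∃ f : Fin n → Q, Function.Bijective f ∧ ∀ j i, f j ≠ M i j := by
  classical
  set t : Fin n → Finset Q := fun j => univ \ (univ.image fun i => M i j) with ht
  have hcardim : ∀ j, (univ.image fun i => M i j).card = k := by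
    intro j
    rw [Finset.card_image_of_injective _ (hcol j), card_univ, Fintype.card_fin]
  have hcardt : ∀ j, (t j).card = n - k := by
    intro j
    rw [ht]
    rw [card_sdiff_of_subset (subset_univ _), card_univ, hQ, hcardim]
  -- each q lies in exactly n - k of the sets t j
  have hfiber : ∀ q : Q, (univ.filter fun j => q ∈ t j).card = n - k := by
    intro q
    have hmem : ∀ j : Fin n, q ∈ t j ↔ ¬ (∃ i, M i j = q) := by
      intro j; simp [ht]
    have hpos : (univ.filter fun j : Fin n => ∃ i, M i j = q).card = k := by
      set g : Fin k → Fin n := fun i => (Equiv.ofBijective (M i) (hrow i)).symm q with hg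
      have hMg : ∀ i, M i (g i) = q := fun i =>
        (Equiv.ofBijective (M i) (hrow i)).apply_symm_apply q
      have hginj : Function.Injective g := by
        intro i i' h
        apply hcol (g i)
        simp only
        rw [hMg i, h, hMg i']
      have himg : (univ.filter fun j : Fin n => ∃ i, M i j = q) = univ.image g := by
        ext j
        simp only [mem_filter, mem_univ, true_and, mem_image]
        constructor
        · rintro ⟨i, hi⟩
          exact ⟨i, (hrow i).1 (by rw [hMg i, hi])⟩
        · rintro ⟨i, hi⟩
          exact ⟨i, by rw [← hi, hMg i]⟩
      rw [himg, Finset.card_image_of_injective _ hginj, card_univ, Fintype.card_fin]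
    have htotal := Finset.card_filter_add_card_filter_not
      (s := (univ : Finset (Fin n))) (p := fun j => ∃ i, M i j = q)
    rw [card_univ, Fintype.card_fin, hpos] at htotal
    calc (univ.filter fun j => q ∈ t j).card
        = (univ.filter fun j : Fin n => ¬ ∃ i, M i j = q).card := by
          apply congrArg
          apply Finset.filter_congr
          intro j _; simp [hmem j]
      _ = n - k := by omega
  -- Hall's condition
  have hall : ∀ s : Finset (Fin n), s.card ≤ (s.biUnion t).card := by
    intro s
    set B := s.biUnion t with hB
    have hsub : ∀ j ∈ s, t j ⊆ B := fun j hj => Finset.subset_biUnion_of_mem t hj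
    have h1 : s.card * (n - k) = ∑ j ∈ s, (t j).card := by
      rw [Finset.sum_congr rfl (fun j _ => hcardt j), Finset.sum_const, smul_eq_mul]
    have h2 : ∀ j ∈ s, (t j).card = ∑ q ∈ B, if q ∈ t j then 1 else 0 := by
      intro j hj
      have hfe : B.filter (fun q => q ∈ t j) = t j := by
        ext q
        simp only [mem_filter]
        exact ⟨fun h => h.2, fun h => ⟨hsub j hj h, h⟩⟩
      rw [← Finset.card_filter, hfe]
    have h3 : ∑ j ∈ s, (t j).card ≤ B.card * (n - k) := by
      calc ∑ j ∈ s, (t j).card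
          = ∑ j ∈ s, ∑ q ∈ B, if q ∈ t j then 1 else 0 :=
            Finset.sum_congr rfl h2
        _ = ∑ q ∈ B, ∑ j ∈ s, if q ∈ t j then 1 else 0 := Finset.sum_comm
        _ ≤ ∑ q ∈ B, ∑ j ∈ (univ : Finset (Fin n)), if q ∈ t j then 1 else 0 := by
            apply Finset.sum_le_sum
            intro q _
            apply Finset.sum_le_sum_of_subset (subset_univ s)
        _ = ∑ q ∈ B, (univ.filter fun j => q ∈ t j).card := by
            apply Finset.sum_congr rfl
            intro q _
            rw [Finset.card_filter]
        _ = B.card * (n - k) := by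
            rw [Finset.sum_congr rfl (fun q _ => hfiber q), Finset.sum_const, smul_eq_mul]
    have h4 : s.card * (n - k) ≤ B.card * (n - k) := by omega
    have hnk : 0 < n - k := by omega
    exact Nat.le_of_mul_le_mul_right h4 hnk
  obtain ⟨f, hfinj, hft⟩ := (Finset.all_card_le_biUnion_card_iff_exists_injective t).1 hall
  refine ⟨f, ?_, ?_⟩
  · rw [Fintype.bijective_iff_injective_and_card, Fintype.card_fin, hQ]
    exact ⟨hfinj, rfl⟩
  · intro j i
    have h2 := hft j
    rw [ht] at h2
    simp only [mem_sdiff, mem_univ, true_and, mem_image, not_exists] at h2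
    intro h
    exact h2 i h.symm

lemma latin_aux (n : ℕ) (Q : Type*) [Fintype Q] [DecidableEq Q]
    (hQ : Fintype.card Q = n) :
    ∀ d k, k + d = n → ∀ M : Fin k → Fin n → Q,
    (∀ i, Function.Bijective (M i)) → (∀ j, Function.Injective fun i => M i j) →
    ∃ L : Fin n → Fin n → Q,
      (∀ (i : Fin n) (hi : (i : ℕ) < k) (j : Fin n), L i j = M ⟨i, hi⟩ j) ∧
      (∀ i, Function.Bijective (L i)) ∧
      (∀ j, Function.Injective fun i => L i j) := by
  intro d
  induction d with
  | zero =>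
    intro k hk M hrow hcol
    have hkn : k = n := by omega
    subst hkn
    exact ⟨M, fun i hi j => by congr, hrow, hcol⟩
  | succ d ih =>
    intro k hk M hrow hcol
    have hkn : k < n := by omega
    obtain ⟨f, hfbij, hfne⟩ := latin_exists_new_row n k hkn Q hQ M hrow hcol
    set M' : Fin (k + 1) → Fin n → Q := Fin.snoc M f with hM'
    have hrow' : ∀ i, Function.Bijective (M' i) := by
      intro i
      refine Fin.lastCases ?_ ?_ i
      · simpa [hM'] using hfbij
      · intro i; simpa [hM'] using hrow i
    have hcol' : ∀ j, Function.Injective fun i => M' i j := by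
      intro j i i'
      refine Fin.lastCases ?_ ?_ i
      · refine Fin.lastCases ?_ ?_ i'
        · intro _; rfl
        · intro b h
          simp only [hM', Fin.snoc_last, Fin.snoc_castSucc] at h
          exact absurd h (hfne j b)
      · intro a
        refine Fin.lastCases ?_ ?_ i'
        · intro h
          simp only [hM', Fin.snoc_last, Fin.snoc_castSucc] at h
          exact absurd h.symm (hfne j a)
        · intro b h
          simp only [hM', Fin.snoc_castSucc] at h
          exact congrArg Fin.castSucc (hcol j h)
    obtain ⟨L, hext, hLrow, hLcol⟩ := ih (k + 1) (by omega) M' hrow' hcol'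
    refine ⟨L, ?_, hLrow, hLcol⟩
    intro i hi j
    have h1 : L i j = M' ⟨i, by omega⟩ j := hext i (by omega) j
    rw [h1]
    have h2 : (⟨(i : ℕ), by omega⟩ : Fin (k + 1)) = Fin.castSucc ⟨i, hi⟩ := rfl
    rw [h2, hM', Fin.snoc_castSucc]

/-- If a `k × n` matrix `M̂` with entries in an `n`-set `Q` has every row a
permutation of `Q` and every column with `k` distinct entries, then `M̂` can be
completed to an `n × n` Latin square on `Q`. -/
theorem latin_square_completion (n k : ℕ) (Q : Type*) [Fintype Q] [DecidableEq Q]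
    (hQ : Fintype.card Q = n) (M : Fin k → Fin n → Q)
    (hrow : ∀ i, Function.Bijective (M i))
    (hcol : ∀ j, Function.Injective fun i => M i j) :
    ∃ L : Fin n → Fin n → Q,
      (∀ (i : Fin n) (hi : (i : ℕ) < k) (j : Fin n), L i j = M ⟨i, hi⟩ j) ∧
      (∀ i, Function.Bijective (L i)) ∧
      (∀ j, Function.Bijective fun i => L i j) := by
  rcases Nat.eq_zero_or_pos n with hn | hn
  · subst hn
    exact ⟨fun i j => i.elim0, fun i => i.elim0, fun i => i.elim0, fun j => j.elim0⟩
  have hkn : k ≤ n := by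
    have := Fintype.card_le_of_injective _ (hcol ⟨0, hn⟩)
    rwa [Fintype.card_fin, hQ] at this
  obtain ⟨L, hext, hLrow, hLcol⟩ := latin_aux n Q hQ (n - k) k (by omega) M hrow hcol
  refine ⟨L, hext, hLrow, fun j => ?_⟩
  rw [Fintype.bijective_iff_injective_and_card, Fintype.card_fin, hQ]
  exact ⟨hLcol j, rfl⟩
end

section
/- For odd t ≥ 15, the sets L_1 = ({(i,0,0,0) : 1 ≤ i ≤ 6}) + A + B + C, L_2 = ({(i,i,0,0) : 1 ≤ i ≤ (t-1)/2}) + A + B, L_3 = ({(i,i,0,0) : (t+1)/2 ≤ i ≤ t-1}) + A + B, and L_4 = ({(i,0,0,0) : 7 ≤ i ≤ (t+11)/2}) + A + C are pairwise disjoint subsets of Z_t⁴, where A = {(i,i,i,i) : i ∈ Z_t}, B = {(i,0,i,0) : i ∈ Z_t}, C = {(i,i,0,0) : i ∈ Z_t}, and sums are coordinatewise mod t. -/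
open Pointwise

/-- `A = {(i,i,i,i) : i ∈ Z_t}`. -/
def setA (t : ℕ) : Set (Fin 4 → ZMod t) := {v | ∃ i : ZMod t, v = fun _ => i}

/-- `B = {(i,0,i,0) : i ∈ Z_t}`. -/
def setB (t : ℕ) : Set (Fin 4 → ZMod t) := {v | ∃ i : ZMod t, v = ![i, 0, i, 0]}

/-- `C = {(i,i,0,0) : i ∈ Z_t}`. -/
def setC (t : ℕ) : Set (Fin 4 → ZMod t) := {v | ∃ i : ZMod t, v = ![i, i, 0, 0]}

/-- `L₁ = {(i,0,0,0) : 1 ≤ i ≤ 6} + A + B + C`. -/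
def setL1 (t : ℕ) : Set (Fin 4 → ZMod t) :=
  {v | ∃ i : ℕ, 1 ≤ i ∧ i ≤ 6 ∧ v = ![(i : ZMod t), 0, 0, 0]} + setA t + setB t + setC t

/-- `L₂ = {(i,i,0,0) : 1 ≤ i ≤ (t-1)/2} + A + B`. -/
def setL2 (t : ℕ) : Set (Fin 4 → ZMod t) :=
  {v | ∃ i : ℕ, 1 ≤ i ∧ i ≤ (t - 1) / 2 ∧ v = ![(i : ZMod t), (i : ZMod t), 0, 0]} +
    setA t + setB t

/-- `L₃ = {(i,i,0,0) : (t+1)/2 ≤ i ≤ t-1} + A + B`. -/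
def setL3 (t : ℕ) : Set (Fin 4 → ZMod t) :=
  {v | ∃ i : ℕ, (t + 1) / 2 ≤ i ∧ i ≤ t - 1 ∧ v = ![(i : ZMod t), (i : ZMod t), 0, 0]} +
    setA t + setB t

/-- `L₄ = {(i,0,0,0) : 7 ≤ i ≤ (t+11)/2} + A + C`. -/
def setL4 (t : ℕ) : Set (Fin 4 → ZMod t) :=
  {v | ∃ i : ℕ, 7 ≤ i ∧ i ≤ (t + 11) / 2 ∧ v = ![(i : ZMod t), 0, 0, 0]} +
    setA t + setC t

lemma memL1' (t : ℕ) (v : Fin 4 → ZMod t) (h : v ∈ setL1 t) :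
    ∃ i : ℕ, 1 ≤ i ∧ i ≤ 6 ∧ v 0 - v 1 - v 2 + v 3 = (i : ZMod t) := by
  rw [setL1, Set.mem_add] at h
  obtain ⟨p, hp, c, hc, rfl⟩ := h
  rw [Set.mem_add] at hp
  obtain ⟨q, hq, b, hb, rfl⟩ := hp
  rw [Set.mem_add] at hq
  obtain ⟨x, hx, a, ha, rfl⟩ := hq
  obtain ⟨i, h1, h6, rfl⟩ := hx
  obtain ⟨ia, rfl⟩ := ha
  obtain ⟨ib, rfl⟩ := hb
  obtain ⟨ic, rfl⟩ := hc
  refine ⟨i, h1, h6, ?_⟩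
  simp [Pi.add_apply, Matrix.vecHead, Matrix.vecTail, Function.comp]
  ring

lemma memL2' (t : ℕ) (v : Fin 4 → ZMod t) (h : v ∈ setL2 t) :
    (v 0 - v 1 - v 2 + v 3 = 0) ∧
      ∃ i : ℕ, 1 ≤ i ∧ i ≤ (t - 1) / 2 ∧ v 1 - v 3 = (i : ZMod t) := by
  rw [setL2, Set.mem_add] at h
  obtain ⟨q, hq, b, hb, rfl⟩ := h
  rw [Set.mem_add] at hq
  obtain ⟨x, hx, a, ha, rfl⟩ := hq
  obtain ⟨i, h1, h2, rfl⟩ := hx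
  obtain ⟨ia, rfl⟩ := ha
  obtain ⟨ib, rfl⟩ := hb
  constructor
  · simp [Pi.add_apply, Matrix.vecHead, Matrix.vecTail, Function.comp]
  · refine ⟨i, h1, h2, ?_⟩
    simp [Pi.add_apply, Matrix.vecHead, Matrix.vecTail, Function.comp]

lemma memL3' (t : ℕ) (v : Fin 4 → ZMod t) (h : v ∈ setL3 t) :
    (v 0 - v 1 - v 2 + v 3 = 0) ∧
      ∃ i : ℕ, (t + 1) / 2 ≤ i ∧ i ≤ t - 1 ∧ v 1 - v 3 = (i : ZMod t) := by
  rw [setL3, Set.mem_add] at h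
  obtain ⟨q, hq, b, hb, rfl⟩ := h
  rw [Set.mem_add] at hq
  obtain ⟨x, hx, a, ha, rfl⟩ := hq
  obtain ⟨i, h1, h2, rfl⟩ := hx
  obtain ⟨ia, rfl⟩ := ha
  obtain ⟨ib, rfl⟩ := hb
  constructor
  · simp [Pi.add_apply, Matrix.vecHead, Matrix.vecTail, Function.comp]
  · refine ⟨i, h1, h2, ?_⟩
    simp [Pi.add_apply, Matrix.vecHead, Matrix.vecTail, Function.comp]

lemma memL4' (t : ℕ) (v : Fin 4 → ZMod t) (h : v ∈ setL4 t) :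
    ∃ i : ℕ, 7 ≤ i ∧ i ≤ (t + 11) / 2 ∧ v 0 - v 1 - v 2 + v 3 = (i : ZMod t) := by
  rw [setL4, Set.mem_add] at h
  obtain ⟨q, hq, c, hc, rfl⟩ := h
  rw [Set.mem_add] at hq
  obtain ⟨x, hx, a, ha, rfl⟩ := hq
  obtain ⟨i, h1, h2, rfl⟩ := hx
  obtain ⟨ia, rfl⟩ := ha
  obtain ⟨ic, rfl⟩ := hc
  refine ⟨i, h1, h2, ?_⟩
  simp [Pi.add_apply, Matrix.vecHead, Matrix.vecTail, Function.comp]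

lemma cast_inj_of_lt (t i j : ℕ) (hi : i < t) (hj : j < t)
    (h : (i : ZMod t) = (j : ZMod t)) : i = j := by
  haveI : NeZero t := ⟨by omega⟩
  have := congrArg ZMod.val h
  rwa [ZMod.val_natCast_of_lt hi, ZMod.val_natCast_of_lt hj] at this

/-- For odd `t ≥ 15`, the sets `L₁, L₂, L₃, L₄` are pairwise disjoint subsets of `Z_t⁴`. -/
theorem L_sets_pairwise_disjoint (t : ℕ) (hodd : Odd t) (ht : 15 ≤ t) :
    Disjoint (setL1 t) (setL2 t) ∧ Disjoint (setL1 t) (setL3 t) ∧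
    Disjoint (setL1 t) (setL4 t) ∧ Disjoint (setL2 t) (setL3 t) ∧
    Disjoint (setL2 t) (setL4 t) ∧ Disjoint (setL3 t) (setL4 t) := by
  obtain ⟨k, hk⟩ := hodd
  refine ⟨?_, ?_, ?_, ?_, ?_, ?_⟩ <;> rw [Set.disjoint_left] <;> intro v h1 h2
  · obtain ⟨i, hi1, hi2, hs⟩ := memL1' t v h1
    obtain ⟨hz, -⟩ := memL2' t v h2
    rw [hz] at hs
    have : i = 0 := cast_inj_of_lt t i 0 (by omega) (by omega) (by simpa using hs.symm)
    omega
  · obtain ⟨i, hi1, hi2, hs⟩ := memL1' t v h1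
    obtain ⟨hz, -⟩ := memL3' t v h2
    rw [hz] at hs
    have : i = 0 := cast_inj_of_lt t i 0 (by omega) (by omega) (by simpa using hs.symm)
    omega
  · obtain ⟨i, hi1, hi2, hs⟩ := memL1' t v h1
    obtain ⟨j, hj1, hj2, hs'⟩ := memL4' t v h2
    have : i = j := cast_inj_of_lt t i j (by omega) (by omega) (hs.symm.trans hs')
    omega
  · obtain ⟨-, i, hi1, hi2, hs⟩ := memL2' t v h1
    obtain ⟨-, j, hj1, hj2, hs'⟩ := memL3' t v h2
    have : i = j := cast_inj_of_lt t i j (by omega) (by omega) (hs.symm.trans hs')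
    omega
  · obtain ⟨hz, -⟩ := memL2' t v h1
    obtain ⟨j, hj1, hj2, hs'⟩ := memL4' t v h2
    rw [hz] at hs'
    have : j = 0 := cast_inj_of_lt t j 0 (by omega) (by omega) (by simpa using hs'.symm)
    omega
  · obtain ⟨hz, -⟩ := memL3' t v h1
    obtain ⟨j, hj1, hj2, hs'⟩ := memL4' t v h2
    rw [hz] at hs'
    have : j = 0 := cast_inj_of_lt t j 0 (by omega) (by omega) (by simpa using hs'.symm)
    omega
end

section
/- The complement L_5 = Z_t⁴ \ (L_1 ∪ L_2 ∪ L_3 ∪ L_4), for odd t ≥ 15 with L_1, L_2, L_3, L_4 as defined from A, B, C (A = {(i,i,i,i)}, B = {(i,0,i,0)}, C = {(i,i,0,0)}, all i ∈ Z_t), can be written as S + A for some S ⊆ Z_t⁴; consequently L_5 is a disjoint union of cosets X + A, each of which corresponds to a parallel class of Z_t × Z_4. -/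
open Pointwise

lemma setA_add_setA (t : ℕ) : setA t + setA t ⊆ setA t := by
  rintro x ⟨a, ⟨i, rfl⟩, b, ⟨j, rfl⟩, rfl⟩
  exact ⟨i + j, rfl⟩

lemma absorbA {t : ℕ} {P Q : Set (Fin 4 → ZMod t)} (h : P = Q + setA t) :
    P + setA t ⊆ P := by
  subst h
  calc Q + setA t + setA t = Q + (setA t + setA t) := by rw [add_assoc]
    _ ⊆ Q + setA t := Set.add_subset_add_left (setA_add_setA t)

lemma setL1_absorb (t : ℕ) : setL1 t + setA t ⊆ setL1 t :=
  absorbA (Q := {v | ∃ i : ℕ, 1 ≤ i ∧ i ≤ 6 ∧ v = ![(i : ZMod t), 0, 0, 0]}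
      + setB t + setC t) (by unfold setL1; abel)

lemma setL2_absorb (t : ℕ) : setL2 t + setA t ⊆ setL2 t :=
  absorbA (Q := {v | ∃ i : ℕ, 1 ≤ i ∧ i ≤ (t - 1) / 2 ∧
      v = ![(i : ZMod t), (i : ZMod t), 0, 0]} + setB t) (by unfold setL2; abel)

lemma setL3_absorb (t : ℕ) : setL3 t + setA t ⊆ setL3 t :=
  absorbA (Q := {v | ∃ i : ℕ, (t + 1) / 2 ≤ i ∧ i ≤ t - 1 ∧
      v = ![(i : ZMod t), (i : ZMod t), 0, 0]} + setB t) (by unfold setL3; abel)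

lemma setL4_absorb (t : ℕ) : setL4 t + setA t ⊆ setL4 t :=
  absorbA (Q := {v | ∃ i : ℕ, 7 ≤ i ∧ i ≤ (t + 11) / 2 ∧
      v = ![(i : ZMod t), 0, 0, 0]} + setC t) (by unfold setL4; abel)

/-- The union of the four lists is saturated under adding diagonal elements. -/
lemma union_saturated (t : ℕ) (w : Fin 4 → ZMod t) (c : ZMod t)
    (hw : w ∈ setL1 t ∪ setL2 t ∪ setL3 t ∪ setL4 t) :
    w + (fun _ => c) ∈ setL1 t ∪ setL2 t ∪ setL3 t ∪ setL4 t := by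
  have hc : (fun _ => c) ∈ setA t := ⟨c, rfl⟩
  rcases hw with ((h | h) | h) | h
  · exact Or.inl (Or.inl (Or.inl (setL1_absorb t ⟨w, h, _, hc, rfl⟩)))
  · exact Or.inl (Or.inl (Or.inr (setL2_absorb t ⟨w, h, _, hc, rfl⟩)))
  · exact Or.inl (Or.inr (setL3_absorb t ⟨w, h, _, hc, rfl⟩))
  · exact Or.inr (setL4_absorb t ⟨w, h, _, hc, rfl⟩)

/-- For odd `t ≥ 15`, the complement `L₅ = Z_t⁴ \ (L₁ ∪ L₂ ∪ L₃ ∪ L₄)` can be written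
as `S + A` for some `S ⊆ Z_t⁴`; consequently `L₅` is a disjoint union of cosets
`X + A`, each of which corresponds to a parallel class of `Z_t × Z_4` (the quadruples
`{(w 0,0),(w 1,1),(w 2,2),(w 3,3)}` for `w ∈ X + A` are pairwise disjoint and
cover `Z_t × Z_4`). -/
theorem L5_union_of_cosets (t : ℕ) (hodd : Odd t) (ht : 15 ≤ t) :
    ∃ S : Set (Fin 4 → ZMod t),
      Set.univ \ (setL1 t ∪ setL2 t ∪ setL3 t ∪ setL4 t) = S + setA t ∧
      (∀ X ∈ S, ∀ Y ∈ S, X ≠ Y →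
        Disjoint (({X} : Set (Fin 4 → ZMod t)) + setA t)
                 (({Y} : Set (Fin 4 → ZMod t)) + setA t)) ∧
      (∀ X ∈ S,
        (∀ w ∈ ({X} : Set (Fin 4 → ZMod t)) + setA t,
          ∀ w' ∈ ({X} : Set (Fin 4 → ZMod t)) + setA t, w ≠ w' →
            Disjoint {p : ZMod t × Fin 4 | p.1 = w p.2}
                     {p : ZMod t × Fin 4 | p.1 = w' p.2}) ∧
        (⋃ w ∈ ({X} : Set (Fin 4 → ZMod t)) + setA t,
          {p : ZMod t × Fin 4 | p.1 = w p.2}) = Set.univ) := by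
  set U := setL1 t ∪ setL2 t ∪ setL3 t ∪ setL4 t with hU
  refine ⟨{v | v ∉ U ∧ v 0 = 0}, ?_, ?_, ?_⟩
  · ext v
    simp only [Set.mem_diff, Set.mem_univ, true_and]
    constructor
    · intro hv
      have hX : (fun j => v j - v 0) ∉ U := by
        intro h
        have := union_saturated t _ (v 0) h
        have hv' : ((fun j => v j - v 0) + fun _ => v 0) = v := by
          funext j; simp
        rw [hv'] at this
        exact hv this
      refine ⟨fun j => v j - v 0, ⟨hX, by simp⟩, fun _ => v 0, ⟨v 0, rfl⟩, ?_⟩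
      funext j; simp
    · rintro ⟨X, ⟨hXU, hX0⟩, a, ⟨i, rfl⟩, rfl⟩
      intro h
      have := union_saturated t _ (-i) h
      have hv' : ((X + fun _ => i) + fun _ => -i) = X := by
        funext j; simp
      rw [hv'] at this
      exact hXU this
  · rintro X ⟨-, hX0⟩ Y ⟨-, hY0⟩ hXY
    rw [Set.disjoint_left]
    rintro w ⟨x, hx, a, ⟨i, rfl⟩, rfl⟩ ⟨y, hy, b, ⟨j, rfl⟩, hw⟩
    rw [Set.mem_singleton_iff] at hx hy
    subst hx; subst hy
    have h0 := congrFun hw 0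
    simp only [Pi.add_apply, hX0, hY0, zero_add] at h0
    subst h0
    exact hXY (by have := add_right_cancel hw; exact this.symm)
  · rintro X -
    constructor
    · rintro w ⟨x, hx, a, ⟨i, rfl⟩, rfl⟩ w' ⟨y, hy, b, ⟨j, rfl⟩, rfl⟩ hne
      rw [Set.mem_singleton_iff] at hx hy
      subst hx; subst hy
      rw [Set.disjoint_left]
      rintro ⟨z, k⟩ h1 h2
      simp only [Set.mem_setOf_eq, Pi.add_apply] at h1 h2
      have : i = j := by
        have := h1.symm.trans h2
        exact add_left_cancel this
      exact hne (by rw [this])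
    · ext ⟨z, k⟩
      simp only [Set.mem_iUnion, Set.mem_setOf_eq, Set.mem_univ, iff_true]
      refine ⟨X + fun _ => z - X k, ⟨X, rfl, fun _ => z - X k, ⟨z - X k, rfl⟩, rfl⟩, ?_⟩
      simp
end
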